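/- Let n and i be natural numbers with 0 < n < 2^i. Then the number of i-bit binary signed-digit representations of n is the (2^i - n)-th term of Stern's diatomic sequence; that is, f(n,i) = c(2^i - n). -/
import Mathlib


/-- Number of `i`-bit binary signed-digit representations of the integer `n`. -/
noncomputable def numBSD (n : ℤ) (i : ℕ) : ℕ :=
  Nat.card {b : Fin i → ℤ //
    (∀ j, b j = -1 ∨ b j = 0 ∨ b j = 1) ∧ n = ∑ j, b j * 2 ^ (j : ℕ)}

/-- Stern's diatomic sequence: `c 0 = 0`, `c 1 = 1`, `c (2m) = c m`,
`c (2m+1) = c m + c (m+1)`. -/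
def stern : ℕ → ℕ
  | 0 => 0
  | 1 => 1
  | n + 2 =>
    if h : n % 2 = 0 then stern (n / 2 + 1)
    else stern (n / 2 + 1) + stern (n / 2 + 2)
decreasing_by all_goals omega

lemma stern_two_mul (k : ℕ) : stern (2 * k) = stern k := by
  match k with
  | 0 => rfl
  | k + 1 =>
    show stern (2 * k + 2) = stern (k + 1)
    rw [stern]
    simp [Nat.mul_mod_right, Nat.mul_div_cancel_left]

lemma stern_odd (k : ℕ) : stern (2 * k + 1) = stern k + stern (k + 1) := by
  match k with
  | 0 => simp [stern]
  | k + 1 =>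
    show stern ((2 * k + 1) + 2) = stern (k + 1) + stern (k + 2)
    rw [stern]
    have h1 : (2 * k + 1) % 2 = 1 := by omega
    have h2 : (2 * k + 1) / 2 = k := by omega
    simp [h1, h2]

lemma stern_two_pow (i : ℕ) : stern (2 ^ i) = 1 := by
  induction i with
  | zero => simp [stern]
  | succ i ih => rw [pow_succ, mul_comm, stern_two_mul, ih]

lemma sum_split (i : ℕ) (b : Fin (i + 1) → ℤ) :
    ∑ j, b j * 2 ^ (j : ℕ) = b 0 + 2 * ∑ j : Fin i, b j.succ * 2 ^ (j : ℕ) := by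
  rw [Fin.sum_univ_succ, Finset.mul_sum]
  simp only [Fin.val_zero, pow_zero, mul_one, Fin.val_succ, pow_succ]
  congr 1
  apply Finset.sum_congr rfl
  intro j _
  ring

lemma bsdFinite (n : ℤ) (i : ℕ) : Finite {b : Fin i → ℤ //
    (∀ j, b j = -1 ∨ b j = 0 ∨ b j = 1) ∧ n = ∑ j, b j * 2 ^ (j : ℕ)} := by
  apply Finite.of_injective (β := Fin i → ({-1, 0, 1} : Finset ℤ))
    (fun x j => ⟨x.1 j, by have := x.2.1 j; simp only [Finset.mem_insert,
      Finset.mem_singleton]; tauto⟩)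
  intro x y h
  apply Subtype.ext
  funext j
  exact congrArg Subtype.val (congrFun h j)

lemma numBSD_two_mul (m : ℤ) (i : ℕ) : numBSD (2 * m) (i + 1) = numBSD m i := by
  rw [numBSD, numBSD]
  apply Nat.card_congr
  have key : ∀ b : Fin (i + 1) → ℤ, (∀ j, b j = -1 ∨ b j = 0 ∨ b j = 1) →
      2 * m = ∑ j, b j * 2 ^ (j : ℕ) →
      b 0 = 0 ∧ m = ∑ j : Fin i, b j.succ * 2 ^ (j : ℕ) := by
    intro b hb hs
    rw [sum_split] at hs
    have h0 := hb 0
    constructor <;> omega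
  refine
    { toFun := fun x => ⟨Fin.tail x.1, fun j => x.2.1 j.succ,
        (key x.1 x.2.1 x.2.2).2⟩
      invFun := fun y => ⟨Fin.cons 0 y.1, ?_, ?_⟩
      left_inv := ?_
      right_inv := ?_ }
  · intro j
    refine Fin.cases ?_ ?_ j
    · right; left; simp
    · intro k; simpa using y.2.1 k
  · rw [sum_split]
    simp only [Fin.cons_zero, Fin.cons_succ]
    rw [← y.2.2]; ring
  · intro x
    apply Subtype.ext
    have h0 : x.1 0 = 0 := (key x.1 x.2.1 x.2.2).1
    simp only
    funext j
    refine Fin.cases ?_ (fun k => ?_) j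
    · rw [Fin.cons_zero, h0]
    · rw [Fin.cons_succ]; rfl
  · intro y
    apply Subtype.ext
    simp only
    exact Fin.tail_cons _ _

lemma numBSD_odd (m : ℤ) (i : ℕ) :
    numBSD (2 * m + 1) (i + 1) = numBSD m i + numBSD (m + 1) i := by
  haveI := bsdFinite m i
  haveI := bsdFinite (m + 1) i
  rw [numBSD, numBSD, numBSD, ← Nat.card_sum]
  apply Nat.card_congr
  have key : ∀ b : Fin (i + 1) → ℤ, (∀ j, b j = -1 ∨ b j = 0 ∨ b j = 1) →
      2 * m + 1 = ∑ j, b j * 2 ^ (j : ℕ) →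
      (b 0 = 1 ∧ m = ∑ j : Fin i, b j.succ * 2 ^ (j : ℕ)) ∨
      (b 0 = -1 ∧ m + 1 = ∑ j : Fin i, b j.succ * 2 ^ (j : ℕ)) := by
    intro b hb hs
    rw [sum_split] at hs
    have h0 := hb 0
    omega
  refine
    { toFun := fun x =>
        if h : x.1 0 = 1 then
          Sum.inl ⟨Fin.tail x.1, fun j => x.2.1 j.succ, by
            rcases key x.1 x.2.1 x.2.2 with ⟨h1, h2⟩ | ⟨h1, h2⟩
            · exact h2
            · rw [h] at h1; norm_num at h1⟩
        else
          Sum.inr ⟨Fin.tail x.1, fun j => x.2.1 j.succ, by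
            rcases key x.1 x.2.1 x.2.2 with ⟨h1, h2⟩ | ⟨h1, h2⟩
            · exact absurd h1 h
            · exact h2⟩
      invFun := fun y =>
        match y with
        | Sum.inl y => ⟨Fin.cons 1 y.1, ?_, ?_⟩
        | Sum.inr y => ⟨Fin.cons (-1) y.1, ?_, ?_⟩
      left_inv := ?_
      right_inv := ?_ }
  · intro j
    refine Fin.cases ?_ ?_ j
    · right; right; simp
    · intro k; simpa using y.2.1 k
  · rw [sum_split]
    simp only [Fin.cons_zero, Fin.cons_succ]
    rw [← y.2.2]; ring
  · intro j
    refine Fin.cases ?_ ?_ j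
    · left; simp
    · intro k; simpa using y.2.1 k
  · rw [sum_split]
    simp only [Fin.cons_zero, Fin.cons_succ]
    rw [← y.2.2]; ring
  · intro x
    by_cases h : x.1 0 = 1
    · simp only [dif_pos h]
      apply Subtype.ext
      simp only
      funext j
      refine Fin.cases ?_ (fun k => ?_) j
      · rw [Fin.cons_zero, h]
      · rw [Fin.cons_succ]; rfl
    · simp only [dif_neg h]
      apply Subtype.ext
      simp only
      have h0 : x.1 0 = -1 := by
        rcases key x.1 x.2.1 x.2.2 with ⟨h1, _⟩ | ⟨h1, _⟩
        · exact absurd h1 h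
        · exact h1
      funext j
      refine Fin.cases ?_ (fun k => ?_) j
      · rw [Fin.cons_zero, h0]
      · rw [Fin.cons_succ]; rfl
  · intro y
    rcases y with y | y
    · simp only
      rw [dif_pos (by simp : (Fin.cons 1 y.1 : Fin (i+1) → ℤ) 0 = 1)]
      rfl
    · simp only
      rw [dif_neg (by simp : ¬ (Fin.cons (-1) y.1 : Fin (i+1) → ℤ) 0 = 1)]
      rfl


lemma geom (i : ℕ) : ∑ j : Fin i, (2 : ℤ) ^ (j : ℕ) = 2 ^ i - 1 := by
  rw [Fin.sum_univ_eq_sum_range]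
  induction i with
  | zero => simp
  | succ i ih => rw [Finset.sum_range_succ, ih]; ring

lemma numBSD_large (n : ℤ) (i : ℕ) (h : 2 ^ i ≤ n) : numBSD n i = 0 := by
  rw [numBSD, Nat.card_eq_zero]
  left
  constructor
  rintro ⟨b, hb, hn⟩
  have hle : ∑ j : Fin i, b j * 2 ^ (j : ℕ) ≤ ∑ j : Fin i, (2 : ℤ) ^ (j : ℕ) := by
    apply Finset.sum_le_sum
    intro j _
    have h1 := hb j
    have h2 : (0:ℤ) < 2 ^ (j : ℕ) := pow_pos (by norm_num) _
    rcases h1 with h1 | h1 | h1 <;> rw [h1] <;> nlinarith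
  rw [geom] at hle
  omega

lemma numBSD_zero_len (n : ℤ) (h : n ≠ 0) : numBSD n 0 = 0 := by
  rw [numBSD, Nat.card_eq_zero]
  left
  constructor
  rintro ⟨b, hb, hn⟩
  simp at hn
  exact h hn

lemma numBSD_zero (i : ℕ) : numBSD 0 i = 1 := by
  induction i with
  | zero =>
    rw [numBSD, Nat.card_eq_one_iff_unique]
    constructor
    · constructor
      intro a b
      apply Subtype.ext
      funext j
      exact j.elim0
    · exact ⟨⟨fun _ => 0, fun j => j.elim0, by simp⟩⟩
  | succ i ih =>
    have := numBSD_two_mul 0 i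
    rw [mul_zero] at this
    rw [this, ih]

lemma key_lemma : ∀ i : ℕ, ∀ n : ℕ, n ≤ 2 ^ i →
    numBSD (n : ℤ) i = stern (2 ^ i - n) := by
  intro i
  induction i with
  | zero =>
    intro n hn
    interval_cases n
    · simpa [stern] using numBSD_zero 0
    · simpa [stern] using numBSD_zero_len 1 (by norm_num)
  | succ i ih =>
    intro n hn
    have hpow : 2 ^ (i + 1) = 2 * 2 ^ i := by ring
    rcases Nat.even_or_odd n with ⟨m, hm⟩ | ⟨m, hm⟩
    · -- n = m + m
      have hm2 : n = 2 * m := by omega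
      have hmle : m ≤ 2 ^ i := by omega
      have cast1 : (n : ℤ) = 2 * (m : ℤ) := by rw [hm2]; push_cast; ring
      rw [cast1, numBSD_two_mul, ih m hmle]
      have : 2 ^ (i + 1) - n = 2 * (2 ^ i - m) := by omega
      rw [this, stern_two_mul]
    · -- n = 2 * m + 1
      have hmlt : m < 2 ^ i := by omega
      have cast1 : (n : ℤ) = 2 * (m : ℤ) + 1 := by rw [hm]; push_cast; ring
      have cast2 : ((m : ℤ) + 1) = ((m + 1 : ℕ) : ℤ) := by push_cast; ring
      rw [cast1, numBSD_odd, ih m (by omega), cast2, ih (m + 1) (by omega)]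
      have : 2 ^ (i + 1) - n = 2 * (2 ^ i - m - 1) + 1 := by omega
      rw [this, stern_odd]
      have e1 : 2 ^ i - m - 1 + 1 = 2 ^ i - m := by omega
      have e2 : 2 ^ i - (m + 1) = 2 ^ i - m - 1 := by omega
      rw [e1, e2]
      omega

theorem bsd_eq_stern (n i : ℕ) (h0 : 0 < n) (h1 : n < 2 ^ i) :
    numBSD (n : ℤ) i = stern (2 ^ i - n) := by
  exact key_lemma i n (by omega)
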